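/- arXiv:2105.01802 — 8 statements merged into one kernel-verified Lean document; each statement's English description precedes it below -/
import Mathlib

section
/- Let (E, ρ) be a q-polymatroid, ⟨·,·⟩ a non-degenerate symmetric bilinear form on E, and define ρ*(V) = dim V + ρ(V^⊥) − ρ(E) for all subspaces V of E, where V^⊥ is the orthogonal of V with respect to the form. Then ρ* is a q-rank function, i.e., (E, ρ*) is a q-polymatroid. -/
/-!
Orthogonality is an inclusion-reversing involution with `dim U^⊥ = dim E - dim U`, so it swaps
`⊔` and `⊓`, and submodularity of `ρ*` is that of `ρ` plus the modular law for dimensions.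
Monotonicity of `ρ*` (hence `ρ* ≥ ρ*(0) = 0`) is the unit-increase property
`ρ A ≤ ρ B + dim A - dim B` for `B ≤ A`, applied to `W^⊥ ≤ U^⊥`; the bound `ρ* U ≤ dim U` is
`ρ(U^⊥) ≤ ρ(E)`.
-/

open Module

section UnitIncrease

variable {K V : Type*} [DivisionRing K] [AddCommGroup V] [Module K V] [FiniteDimensional K V]
  {ρ : Submodule K V → ℚ}

/-- Completing `U` to `W` by a complement `C` of `U` inside `W`, submodularity gives
`ρ W + ρ ⊥ ≤ ρ U + ρ C`, and `ρ C ≤ dim C = dim W - dim U`. -/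
lemma rank_le_rank_add_finrank_sub (hbot : 0 ≤ ρ ⊥) (hdim : ∀ U, ρ U ≤ finrank K U)
    (hsub : ∀ U W, ρ (U ⊔ W) + ρ (U ⊓ W) ≤ ρ U + ρ W) {U W : Submodule K V} (hUW : U ≤ W) :
    ρ W ≤ ρ U + finrank K W - finrank K U := by
  obtain ⟨C', hC'⟩ := Submodule.exists_isCompl U
  set C := C' ⊓ W
  have hsup : U ⊔ C = W := by
    rw [← sup_inf_assoc_of_le C' hUW, hC'.codisjoint.eq_top, top_inf_eq]
  have hinf : U ⊓ C = ⊥ := disjoint_iff.mp (hC'.disjoint.mono_right inf_le_left)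
  have hfinrank : finrank K W = finrank K U + finrank K C := by
    have h := Submodule.finrank_sup_add_finrank_inf_eq U C
    rwa [hsup, hinf, finrank_bot, add_zero] at h
  have hsubUC := hsub U C
  rw [hsup, hinf] at hsubUC
  have hdimC := hdim C
  rw [hfinrank, Nat.cast_add]
  linarith

end UnitIncrease

namespace LinearMap.BilinForm

variable {R M : Type*} [CommRing R] [AddCommGroup M] [Module R M] (B : LinearMap.BilinForm R M)

lemma orthogonal_sup (U W : Submodule R M) :
    B.orthogonal (U ⊔ W) = B.orthogonal U ⊓ B.orthogonal W := by
  ext x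
  exact sup_le_iff (a := U) (b := W) (c := LinearMap.ker (B.flip x))

variable {K V : Type*} [Field K] [AddCommGroup V] [Module K V] [FiniteDimensional K V]
  {B : LinearMap.BilinForm K V}

lemma orthogonal_inf (hB : B.Nondegenerate) (hB₀ : B.IsRefl) (U W : Submodule K V) :
    B.orthogonal (U ⊓ W) = B.orthogonal U ⊔ B.orthogonal W := by
  conv_lhs => rw [← orthogonal_orthogonal hB hB₀ U, ← orthogonal_orthogonal hB hB₀ W,
    ← orthogonal_sup, orthogonal_orthogonal hB hB₀]

lemma finrank_add_finrank_orthogonal_of_nondegenerate (hB : B.Nondegenerate)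
    (U : Submodule K V) : finrank K U + finrank K (B.orthogonal U) = finrank K V := by
  rw [finrank_orthogonal hB]
  exact Nat.add_sub_cancel' U.finrank_le

end LinearMap.BilinForm

section DualRank

open LinearMap.BilinForm

variable {K V : Type*} [Field K] [AddCommGroup V] [Module K V]
  {ρ : Submodule K V → ℚ} {B : LinearMap.BilinForm K V}

variable (ρ B) in
noncomputable def dualRank (U : Submodule K V) : ℚ := finrank K U + ρ (B.orthogonal U) - ρ ⊤

lemma dualRank_bot : dualRank ρ B ⊥ = 0 := by
  simp [dualRank]

lemma dualRank_le_finrank (hmono : Monotone ρ) (U : Submodule K V) :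
    dualRank ρ B U ≤ finrank K U := by
  have := hmono (le_top : B.orthogonal U ≤ ⊤)
  unfold dualRank
  linarith

variable [FiniteDimensional K V]

lemma dualRank_mono (hB : B.Nondegenerate) (hbot : 0 ≤ ρ ⊥) (hdim : ∀ U, ρ U ≤ finrank K U)
    (hsub : ∀ U W, ρ (U ⊔ W) + ρ (U ⊓ W) ≤ ρ U + ρ W) : Monotone (dualRank ρ B) := by
  intro U W hUW
  have key := rank_le_rank_add_finrank_sub hbot hdim hsub (B.orthogonal_le hUW)
  have hU : (finrank K U : ℚ) + finrank K (B.orthogonal U) = finrank K V := by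
    exact_mod_cast finrank_add_finrank_orthogonal_of_nondegenerate hB U
  have hW : (finrank K W : ℚ) + finrank K (B.orthogonal W) = finrank K V := by
    exact_mod_cast finrank_add_finrank_orthogonal_of_nondegenerate hB W
  unfold dualRank
  linarith

lemma dualRank_nonneg (hB : B.Nondegenerate) (hbot : 0 ≤ ρ ⊥) (hdim : ∀ U, ρ U ≤ finrank K U)
    (hsub : ∀ U W, ρ (U ⊔ W) + ρ (U ⊓ W) ≤ ρ U + ρ W) (U : Submodule K V) :
    0 ≤ dualRank ρ B U :=
  dualRank_bot (ρ := ρ) (B := B) ▸ dualRank_mono hB hbot hdim hsub bot_le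

lemma dualRank_submodular (hB : B.Nondegenerate) (hB₀ : B.IsRefl)
    (hsub : ∀ U W, ρ (U ⊔ W) + ρ (U ⊓ W) ≤ ρ U + ρ W) (U W : Submodule K V) :
    dualRank ρ B (U ⊔ W) + dualRank ρ B (U ⊓ W) ≤ dualRank ρ B U + dualRank ρ B W := by
  have hsubOrth := hsub (B.orthogonal U) (B.orthogonal W)
  have hmodular : (finrank K ↥(U ⊔ W) : ℚ) + finrank K ↥(U ⊓ W) = finrank K U + finrank K W := by
    exact_mod_cast Submodule.finrank_sup_add_finrank_inf_eq U W
  simp only [dualRank, orthogonal_sup, orthogonal_inf hB hB₀]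
  linarith

end DualRank

theorem qpm_dual_is_rank_function_general
    {𝔽 E : Type*} [Field 𝔽] [AddCommGroup E] [Module 𝔽 E]
    [FiniteDimensional 𝔽 E] (ρ : Submodule 𝔽 E → ℚ)
    (hR1 : ∀ V : Submodule 𝔽 E, 0 ≤ ρ V ∧ ρ V ≤ (finrank 𝔽 V : ℚ))
    (hR2 : ∀ V W : Submodule 𝔽 E, V ≤ W → ρ V ≤ ρ W)
    (hR3 : ∀ V W : Submodule 𝔽 E, ρ (V ⊔ W) + ρ (V ⊓ W) ≤ ρ V + ρ W)
    (B : LinearMap.BilinForm 𝔽 E) (hsymm : B.IsSymm) (hnd : B.Nondegenerate)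
    (ρs : Submodule 𝔽 E → ℚ)
    (hρs : ∀ V : Submodule 𝔽 E,
      ρs V = (finrank 𝔽 V : ℚ) + ρ (B.orthogonal V) - ρ (⊤ : Submodule 𝔽 E)) :
    (∀ V : Submodule 𝔽 E, 0 ≤ ρs V ∧ ρs V ≤ (finrank 𝔽 V : ℚ)) ∧
    (∀ V W : Submodule 𝔽 E, V ≤ W → ρs V ≤ ρs W) ∧
    (∀ V W : Submodule 𝔽 E, ρs (V ⊔ W) + ρs (V ⊓ W) ≤ ρs V + ρs W) := by
  obtain rfl : ρs = dualRank ρ B := funext hρs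
  have hbot : 0 ≤ ρ ⊥ := (hR1 ⊥).1
  have hdim (V : Submodule 𝔽 E) : ρ V ≤ finrank 𝔽 V := (hR1 V).2
  refine ⟨fun V => ⟨dualRank_nonneg hnd hbot hdim hR3 V, dualRank_le_finrank hR2 V⟩,
    fun _ _ hVW => dualRank_mono hnd hbot hdim hR3 hVW, ?_⟩
  exact dualRank_submodular hnd hsymm.isRefl hR3

theorem qpm_dual_is_rank_function
    {𝔽 E : Type*} [Field 𝔽] [Fintype 𝔽] [AddCommGroup E] [Module 𝔽 E]
    [FiniteDimensional 𝔽 E] (ρ : Submodule 𝔽 E → ℚ)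
    (hR1 : ∀ V : Submodule 𝔽 E, 0 ≤ ρ V ∧ ρ V ≤ (finrank 𝔽 V : ℚ))
    (hR2 : ∀ V W : Submodule 𝔽 E, V ≤ W → ρ V ≤ ρ W)
    (hR3 : ∀ V W : Submodule 𝔽 E, ρ (V ⊔ W) + ρ (V ⊓ W) ≤ ρ V + ρ W)
    (B : LinearMap.BilinForm 𝔽 E) (hsymm : B.IsSymm) (hnd : B.Nondegenerate)
    (ρs : Submodule 𝔽 E → ℚ)
    (hρs : ∀ V : Submodule 𝔽 E,
      ρs V = (finrank 𝔽 V : ℚ) + ρ (B.orthogonal V) - ρ (⊤ : Submodule 𝔽 E)) :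
    (∀ V : Submodule 𝔽 E, 0 ≤ ρs V ∧ ρs V ≤ (finrank 𝔽 V : ℚ)) ∧
    (∀ V W : Submodule 𝔽 E, V ≤ W → ρs V ≤ ρs W) ∧
    (∀ V W : Submodule 𝔽 E, ρs (V ⊔ W) + ρs (V ⊓ W) ≤ ρs V + ρs W) :=
  qpm_dual_is_rank_function_general ρ hR1 hR2 hR3 B hsymm hnd ρs hρs
end

section
/- Let (E, ρ) be a q-polymatroid with denominator μ (i.e., μρ(V) ∈ ℕ for all subspaces V), and let V be a μ-circuit, i.e., V is μ-dependent but every proper subspace of V is μ-independent. Then μρ(V) = dim V − 1 and μρ(W) = dim V − 1 for every hyperplane W of V. -/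
open Module

/-- A subspace `I` is `μ`-independent in the `q`-polymatroid `(E, ρ)` if
`ρ(J) ≥ dim J / μ` for all subspaces `J ≤ I`. -/
def IsMuIndep {𝔽 E : Type*} [Field 𝔽] [AddCommGroup E] [Module 𝔽 E]
    (μ : ℚ) (ρ : Submodule 𝔽 E → ℚ) (I : Submodule 𝔽 E) : Prop :=
  ∀ J ≤ I, (finrank 𝔽 J : ℚ) / μ ≤ ρ J

theorem qpm_circuit_rank
    {𝔽 E : Type*} [Field 𝔽] [Fintype 𝔽] [AddCommGroup E] [Module 𝔽 E]
    [FiniteDimensional 𝔽 E] (ρ : Submodule 𝔽 E → ℚ)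
    (hR1 : ∀ V : Submodule 𝔽 E, 0 ≤ ρ V ∧ ρ V ≤ (finrank 𝔽 V : ℚ))
    (hR2 : ∀ V W : Submodule 𝔽 E, V ≤ W → ρ V ≤ ρ W)
    (hR3 : ∀ V W : Submodule 𝔽 E, ρ (V ⊔ W) + ρ (V ⊓ W) ≤ ρ V + ρ W)
    (μ : ℚ) (hμ : 0 < μ) (hden : ∀ V : Submodule 𝔽 E, ∃ n : ℕ, μ * ρ V = n)
    (V : Submodule 𝔽 E)
    (hdep : ¬ IsMuIndep μ ρ V)
    (hmin : ∀ W : Submodule 𝔽 E, W < V → IsMuIndep μ ρ W) :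
    μ * ρ V = (finrank 𝔽 V : ℚ) - 1 ∧
    ∀ W ≤ V, finrank 𝔽 W + 1 = finrank 𝔽 V → μ * ρ W = (finrank 𝔽 V : ℚ) - 1 := by
  classical
  set d := finrank 𝔽 V with hd
  -- V itself violates the independence inequality
  have hVlt : ρ V < (d : ℚ) / μ := by
    unfold IsMuIndep at hdep
    push_neg at hdep
    obtain ⟨J, hJV, hJ⟩ := hdep
    rcases hJV.lt_or_eq with h | h
    · exact absurd (hmin J h J le_rfl) (not_le.mpr hJ)
    · rwa [h] at hJ
  have hmul : μ * ρ V < (d : ℚ) := by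
    rw [lt_div_iff₀ hμ] at hVlt
    linarith [hVlt]
  obtain ⟨n, hn⟩ := hden V
  have hnd : n < d := by exact_mod_cast hn ▸ hmul
  have hub : μ * ρ V ≤ (d : ℚ) - 1 := by
    rw [hn]
    have : (n : ℚ) ≤ (d : ℚ) - 1 := by
      have : n + 1 ≤ d := hnd
      have := (Nat.cast_le (α := ℚ)).mpr this
      push_cast at this
      linarith
    exact this
  have hd1 : 1 ≤ d := by
    by_contra h
    have hd0 : d = 0 := by omega
    have := (hR1 V).1
    rw [hd0] at hmul
    simp at hmul
    nlinarith
  -- key fact for hyperplanes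
  have key : ∀ W ≤ V, finrank 𝔽 W + 1 = finrank 𝔽 V →
      μ * ρ W = (d : ℚ) - 1 ∧ (d : ℚ) - 1 ≤ μ * ρ V := by
    intro W hWV hWd
    have hlt : W < V := by
      rcases hWV.lt_or_eq with h | h
      · exact h
      · exfalso; rw [h] at hWd; omega
    have hindep := hmin W hlt W le_rfl
    have hWr : (finrank 𝔽 W : ℚ) = (d : ℚ) - 1 := by
      have : (finrank 𝔽 W : ℚ) + 1 = (d : ℚ) := by exact_mod_cast hWd
      linarith
    rw [hWr, div_le_iff₀ hμ] at hindep
    have h1 : (d : ℚ) - 1 ≤ μ * ρ W := by linarith [hindep]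
    have h2 : μ * ρ W ≤ μ * ρ V :=
      mul_le_mul_of_nonneg_left (hR2 W V hWV) hμ.le
    exact ⟨le_antisymm (h2.trans hub) h1, h1.trans h2⟩
  -- existence of a hyperplane of V
  have ⟨W, hWV, hWd⟩ : ∃ W ≤ V, finrank 𝔽 W + 1 = finrank 𝔽 V := by
    have b := Module.finBasis 𝔽 V
    rw [← hd] at b
    set f : Fin (d - 1) → E := fun i => (b (Fin.castLE (by omega) i) : E) with hf
    refine ⟨Submodule.span 𝔽 (Set.range f), ?_, ?_⟩
    · rw [Submodule.span_le]
      rintro x ⟨i, rfl⟩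
      exact (b (Fin.castLE (by omega) i)).2
    · have hb : LinearIndependent 𝔽 fun i => (b i : E) :=
        b.linearIndependent.map' V.subtype V.ker_subtype
      have hli : LinearIndependent 𝔽 f :=
        hb.comp (Fin.castLE (by omega)) (Fin.castLE_injective _)
      rw [finrank_span_eq_card hli, Fintype.card_fin]
      omega
  obtain ⟨h1, h2⟩ := key W hWV hWd
  exact ⟨le_antisymm hub h2, fun W' hW'V hW'd => (key W' hW'V hW'd).1⟩
end

section
/- Let (E, ρ) be a q-polymatroid with denominator μ, and define r(V) = min{μρ(W) + dim V − dim W : W ≤ V}. Then r is submodular: r(V+V') + r(V∩V') ≤ r(V) + r(V') for all subspaces V, V' of E. -/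
open Module

theorem aux_matroid_rank_submodular
    {𝔽 E : Type*} [Field 𝔽] [Fintype 𝔽] [AddCommGroup E] [Module 𝔽 E]
    [FiniteDimensional 𝔽 E] (ρ : Submodule 𝔽 E → ℚ)
    (hR1 : ∀ V : Submodule 𝔽 E, 0 ≤ ρ V ∧ ρ V ≤ (finrank 𝔽 V : ℚ))
    (hR2 : ∀ V W : Submodule 𝔽 E, V ≤ W → ρ V ≤ ρ W)
    (hR3 : ∀ V W : Submodule 𝔽 E, ρ (V ⊔ W) + ρ (V ⊓ W) ≤ ρ V + ρ W)
    (μ : ℚ) (hμ : 0 < μ) (hden : ∀ V : Submodule 𝔽 E, ∃ n : ℕ, μ * ρ V = n)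
    (r : Submodule 𝔽 E → ℚ)
    (hr : ∀ V : Submodule 𝔽 E,
      IsLeast {x : ℚ | ∃ W ≤ V, x = μ * ρ W + (finrank 𝔽 V : ℚ) - (finrank 𝔽 W : ℚ)} (r V)) :
    ∀ V V' : Submodule 𝔽 E, r (V ⊔ V') + r (V ⊓ V') ≤ r V + r V' := by
  intro V V'
  obtain ⟨⟨W, hWV, hWeq⟩, _⟩ := hr V
  obtain ⟨⟨W', hWV', hWeq'⟩, _⟩ := hr V'
  have hub1 : r (V ⊔ V') ≤ μ * ρ (W ⊔ W') + (finrank 𝔽 ↥(V ⊔ V') : ℚ)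
      - (finrank 𝔽 ↥(W ⊔ W') : ℚ) :=
    (hr (V ⊔ V')).2 ⟨W ⊔ W', sup_le_sup hWV hWV', rfl⟩
  have hub2 : r (V ⊓ V') ≤ μ * ρ (W ⊓ W') + (finrank 𝔽 ↥(V ⊓ V') : ℚ)
      - (finrank 𝔽 ↥(W ⊓ W') : ℚ) :=
    (hr (V ⊓ V')).2 ⟨W ⊓ W', inf_le_inf hWV hWV', rfl⟩
  have hdimV : (finrank 𝔽 ↥(V ⊔ V') : ℚ) + (finrank 𝔽 ↥(V ⊓ V') : ℚ)
      = (finrank 𝔽 V : ℚ) + (finrank 𝔽 V' : ℚ) := by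
    exact_mod_cast congrArg (Nat.cast : ℕ → ℚ)
      (Submodule.finrank_sup_add_finrank_inf_eq V V')
  have hdimW : (finrank 𝔽 ↥(W ⊔ W') : ℚ) + (finrank 𝔽 ↥(W ⊓ W') : ℚ)
      = (finrank 𝔽 W : ℚ) + (finrank 𝔽 W' : ℚ) := by
    exact_mod_cast congrArg (Nat.cast : ℕ → ℚ)
      (Submodule.finrank_sup_add_finrank_inf_eq W W')
  have hsub : μ * ρ (W ⊔ W') + μ * ρ (W ⊓ W') ≤ μ * ρ W + μ * ρ W' := by
    have := mul_le_mul_of_nonneg_left (hR3 W W') hμ.le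
    linarith [this, mul_add μ (ρ (W ⊔ W')) (ρ (W ⊓ W')), mul_add μ (ρ W) (ρ W')]
  rw [hWeq, hWeq']
  linarith
end

section
/- Let (E, ρ) be a q-polymatroid with denominator μ, and define r(V) = min{μρ(W) + dim V − dim W : W ≤ V}. Then for every subspace V of E: V is μ-independent (i.e., μρ(J) ≥ dim J for all J ≤ V) if and only if r(V) = dim V. -/
open Module

theorem aux_matroid_indep_iff
    {𝔽 E : Type*} [Field 𝔽] [Fintype 𝔽] [AddCommGroup E] [Module 𝔽 E]
    [FiniteDimensional 𝔽 E] (ρ : Submodule 𝔽 E → ℚ)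
    (hR1 : ∀ V : Submodule 𝔽 E, 0 ≤ ρ V ∧ ρ V ≤ (finrank 𝔽 V : ℚ))
    (hR2 : ∀ V W : Submodule 𝔽 E, V ≤ W → ρ V ≤ ρ W)
    (hR3 : ∀ V W : Submodule 𝔽 E, ρ (V ⊔ W) + ρ (V ⊓ W) ≤ ρ V + ρ W)
    (μ : ℚ) (hμ : 0 < μ) (hden : ∀ V : Submodule 𝔽 E, ∃ n : ℕ, μ * ρ V = n)
    (r : Submodule 𝔽 E → ℚ)
    (hr : ∀ V : Submodule 𝔽 E,
      IsLeast {x : ℚ | ∃ W ≤ V, x = μ * ρ W + (finrank 𝔽 V : ℚ) - (finrank 𝔽 W : ℚ)} (r V)) :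
    ∀ V : Submodule 𝔽 E, IsMuIndep μ ρ V ↔ r V = (finrank 𝔽 V : ℚ) := by
  intro V
  obtain ⟨hmem, hlb⟩ := hr V
  have hbot : ρ (⊥ : Submodule 𝔽 E) = 0 := by
    have h1 := (hR1 ⊥).1
    have h2 := (hR1 ⊥).2
    simp [finrank_bot] at h2
    linarith
  constructor
  · intro hind
    have hle : r V ≤ (finrank 𝔽 V : ℚ) := by
      apply hlb
      exact ⟨⊥, bot_le, by simp [hbot, finrank_bot]⟩
    have hge : (finrank 𝔽 V : ℚ) ≤ r V := by
      obtain ⟨W, hWV, hWeq⟩ := hmem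
      have := hind W hWV
      have : (finrank 𝔽 W : ℚ) ≤ μ * ρ W := by
        rw [div_le_iff₀ hμ] at this
        linarith [this]
      linarith
    linarith
  · intro hrV J hJV
    have : μ * ρ J + (finrank 𝔽 V : ℚ) - (finrank 𝔽 J : ℚ) ∈
        {x : ℚ | ∃ W ≤ V, x = μ * ρ W + (finrank 𝔽 V : ℚ) - (finrank 𝔽 W : ℚ)} :=
      ⟨J, hJV, rfl⟩
    have h := hlb this
    rw [hrV] at h
    rw [div_le_iff₀ hμ]
    linarith
end

section
/- Let (E, ρ) be a q-polymatroid with denominator μ and V a subspace of E. If I is a μ-basis of V, i.e., a μ-independent subspace of V of maximal dimension among μ-independent subspaces of V, then ρ(I) = ρ(V). In particular, all μ-bases of V have the same rank value. -/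
open Module

/-! If `I` is a `μ`-basis of `V` with `ρ(I) < ρ(V)`, submodularity yields a single vector
`x ∈ V` with `ρ(I) < ρ(I + ⟨x⟩)`. Since `μρ` is integer valued, the rank then jumps by at
least `1/μ`, and submodularity again shows that `I + ⟨x⟩` is still `μ`-independent, contradicting
the maximality of `dim I`. -/

section Submodular

variable {α : Type*} [Lattice α] {ρ : α → ℚ}

theorem rank_sup_sup_le_of_sup_le (hmono : ∀ a b : α, a ≤ b → ρ a ≤ ρ b)
    (hsub : ∀ a b : α, ρ (a ⊔ b) + ρ (a ⊓ b) ≤ ρ a + ρ b) {i a b : α}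
    (ha : ρ (i ⊔ a) ≤ ρ i) (hb : ρ (i ⊔ b) ≤ ρ i) : ρ (i ⊔ (a ⊔ b)) ≤ ρ i := by
  have hinf : ρ i ≤ ρ ((i ⊔ a) ⊓ (i ⊔ b)) := hmono _ _ (le_inf le_sup_left le_sup_left)
  have := hsub (i ⊔ a) (i ⊔ b)
  rw [sup_sup_distrib_left]
  linarith

theorem rank_sup_finset_sup_le [OrderBot α] (hmono : ∀ a b : α, a ≤ b → ρ a ≤ ρ b)
    (hsub : ∀ a b : α, ρ (a ⊔ b) + ρ (a ⊓ b) ≤ ρ a + ρ b) {β : Type*} {i : α}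
    (s : Finset β) (f : β → α) (h : ∀ b ∈ s, ρ (i ⊔ f b) ≤ ρ i) :
    ρ (i ⊔ s.sup f) ≤ ρ i :=
  Finset.sup_induction (p := fun a => ρ (i ⊔ a) ≤ ρ i) (by rw [sup_bot_eq])
    (fun _ ha _ hb => rank_sup_sup_le_of_sup_le hmono hsub ha hb) h

end Submodular

section Polymatroid

variable {𝔽 E : Type*} [Field 𝔽] [AddCommGroup E] [Module 𝔽 E] {ρ : Submodule 𝔽 E → ℚ}

theorem exists_lt_rank_sup_span_singleton
    (hmono : ∀ V W : Submodule 𝔽 E, V ≤ W → ρ V ≤ ρ W)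
    (hsub : ∀ V W : Submodule 𝔽 E, ρ (V ⊔ W) + ρ (V ⊓ W) ≤ ρ V + ρ W)
    {I V : Submodule 𝔽 E} (hV : V.FG) (hIV : I ≤ V) (hlt : ρ I < ρ V) :
    ∃ x ∈ V, ρ I < ρ (I ⊔ Submodule.span 𝔽 {x}) := by
  by_contra! h
  obtain ⟨s, rfl⟩ := hV
  have hle := rank_sup_finset_sup_le hmono hsub s (fun x => Submodule.span 𝔽 {x})
    fun x hx => h x (Submodule.subset_span hx)
  have hspan : s.sup (fun x => Submodule.span 𝔽 {x}) = Submodule.span 𝔽 (s : Set E) := by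
    rw [Finset.sup_eq_iSup, Submodule.span_eq_iSup_of_singleton_spans]
    simp only [Finset.mem_coe]
  rw [hspan, sup_eq_right.2 hIV] at hle
  linarith

theorem IsMuIndep.sup_span_singleton [FiniteDimensional 𝔽 E]
    (hsub : ∀ V W : Submodule 𝔽 E, ρ (V ⊔ W) + ρ (V ⊓ W) ≤ ρ V + ρ W)
    {μ : ℚ} {I : Submodule 𝔽 E} {x : E} (hI : IsMuIndep μ ρ I) (hx : x ∉ I)
    (hgap : ρ I + 1 / μ ≤ ρ (I ⊔ Submodule.span 𝔽 {x})) :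
    IsMuIndep μ ρ (I ⊔ Submodule.span 𝔽 {x}) := by
  intro J hJ
  by_cases hJI : J ≤ I
  · exact hI J hJI
  have hcov : I ⋖ I ⊔ Submodule.span 𝔽 {x} := by
    rw [sup_comm]
    exact Submodule.covBy_span_singleton_sup hx
  have hJsup : J ⊔ I = I ⊔ Submodule.span 𝔽 {x} :=
    ((hcov.eq_or_eq le_sup_right (sup_le hJ hcov.le)).resolve_left
      fun h => hJI (h ▸ le_sup_left))
  have hdim : finrank 𝔽 J = finrank 𝔽 ↥(J ⊓ I) + 1 := by
    have := Submodule.finrank_sup_add_finrank_inf_eq J I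
    rw [hJsup, Submodule.finrank_sup_span_singleton hx] at this
    omega
  have hinf_indep := hI (J ⊓ I) inf_le_right
  have := hsub J I
  rw [hJsup] at this
  rw [hdim, Nat.cast_succ, add_div]
  linarith

end Polymatroid

theorem add_one_div_le_of_lt_of_mul_eq_natCast {K : Type*} [Field K] [LinearOrder K]
    [IsStrictOrderedRing K] {μ a b : K} {m n : ℕ} (hμ : 0 < μ)
    (ha : μ * a = m) (hb : μ * b = n) (hab : a < b) : a + 1 / μ ≤ b := by
  have hmn : m + 1 ≤ n := by
    have : (m : K) < n := by rw [← ha, ← hb]; exact mul_lt_mul_of_pos_left hab hμ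
    exact_mod_cast this
  refine le_of_mul_le_mul_left ?_ hμ
  rw [mul_add, ha, hb, mul_one_div_cancel hμ.ne']
  exact_mod_cast hmn

theorem qpm_basis_rank_general
    {𝔽 E : Type*} [Field 𝔽] [AddCommGroup E] [Module 𝔽 E]
    [FiniteDimensional 𝔽 E] (ρ : Submodule 𝔽 E → ℚ)
    (hR2 : ∀ V W : Submodule 𝔽 E, V ≤ W → ρ V ≤ ρ W)
    (hR3 : ∀ V W : Submodule 𝔽 E, ρ (V ⊔ W) + ρ (V ⊓ W) ≤ ρ V + ρ W)
    (μ : ℚ) (hμ : 0 < μ) (hden : ∀ V : Submodule 𝔽 E, ∃ n : ℕ, μ * ρ V = n)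
    (V I : Submodule 𝔽 E) (hIV : I ≤ V) (hI : IsMuIndep μ ρ I)
    (hmax : ∀ J ≤ V, IsMuIndep μ ρ J → finrank 𝔽 J ≤ finrank 𝔽 I) :
    ρ I = ρ V := by
  by_contra hne
  obtain ⟨x, hxV, hx⟩ := exists_lt_rank_sup_span_singleton hR2 hR3
    (IsNoetherian.noetherian V) hIV ((hR2 I V hIV).lt_of_ne hne)
  have hxI : x ∉ I := fun hxI => hx.ne <| by
    rw [sup_eq_left.2 ((Submodule.span_singleton_le_iff_mem x I).2 hxI)]
  obtain ⟨m, hm⟩ := hden I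
  obtain ⟨n, hn⟩ := hden (I ⊔ Submodule.span 𝔽 {x})
  have hext := hI.sup_span_singleton hR3 hxI
    (add_one_div_le_of_lt_of_mul_eq_natCast hμ hm hn hx)
  have hle := hmax _ (sup_le hIV ((Submodule.span_singleton_le_iff_mem x V).2 hxV)) hext
  rw [Submodule.finrank_sup_span_singleton hxI] at hle
  omega

theorem qpm_basis_rank
    {𝔽 E : Type*} [Field 𝔽] [Fintype 𝔽] [AddCommGroup E] [Module 𝔽 E]
    [FiniteDimensional 𝔽 E] (ρ : Submodule 𝔽 E → ℚ)
    (hR1 : ∀ V : Submodule 𝔽 E, 0 ≤ ρ V ∧ ρ V ≤ (finrank 𝔽 V : ℚ))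
    (hR2 : ∀ V W : Submodule 𝔽 E, V ≤ W → ρ V ≤ ρ W)
    (hR3 : ∀ V W : Submodule 𝔽 E, ρ (V ⊔ W) + ρ (V ⊓ W) ≤ ρ V + ρ W)
    (μ : ℚ) (hμ : 0 < μ) (hden : ∀ V : Submodule 𝔽 E, ∃ n : ℕ, μ * ρ V = n)
    (V I : Submodule 𝔽 E) (hIV : I ≤ V) (hI : IsMuIndep μ ρ I)
    (hmax : ∀ J ≤ V, IsMuIndep μ ρ J → finrank 𝔽 J ≤ finrank 𝔽 I) :
    ρ I = ρ V :=
  qpm_basis_rank_general ρ hR2 hR3 μ hμ hden V I hIV hI hmax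
end

section
/- Let (E, ρ) be a q-polymatroid with denominator μ. Every minimal spanning space of (E, ρ) is μ-independent. -/
open Module

/-- Any subspace of finrank `n+1` contains a subspace of finrank `n`. -/
lemma exists_hyperplane {𝔽 E : Type*} [Field 𝔽] [AddCommGroup E] [Module 𝔽 E]
    [FiniteDimensional 𝔽 E] (J : Submodule 𝔽 E) {n : ℕ} (h : finrank 𝔽 J = n + 1) :
    ∃ J' : Submodule 𝔽 E, J' ≤ J ∧ finrank 𝔽 J' = n := by
  obtain ⟨f, hf⟩ := exists_linearIndependent_of_le_finrank (R := 𝔽) (M := J)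
    (n := n) (by omega)
  refine ⟨(Submodule.span 𝔽 (Set.range f)).map J.subtype, Submodule.map_subtype_le _ _, ?_⟩
  rw [Submodule.finrank_map_subtype_eq]
  rw [finrank_span_eq_card hf, Fintype.card_fin]

theorem qpm_minimal_spanning_indep
    {𝔽 E : Type*} [Field 𝔽] [Fintype 𝔽] [AddCommGroup E] [Module 𝔽 E]
    [FiniteDimensional 𝔽 E] (ρ : Submodule 𝔽 E → ℚ)
    (hR1 : ∀ V : Submodule 𝔽 E, 0 ≤ ρ V ∧ ρ V ≤ (finrank 𝔽 V : ℚ))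
    (hR2 : ∀ V W : Submodule 𝔽 E, V ≤ W → ρ V ≤ ρ W)
    (hR3 : ∀ V W : Submodule 𝔽 E, ρ (V ⊔ W) + ρ (V ⊓ W) ≤ ρ V + ρ W)
    (μ : ℚ) (hμ : 0 < μ) (hden : ∀ V : Submodule 𝔽 E, ∃ n : ℕ, μ * ρ V = n)
    (V : Submodule 𝔽 E)
    (hspan : ρ V = ρ (⊤ : Submodule 𝔽 E))
    (hminimal : ∀ W : Submodule 𝔽 E, W < V → ρ W ≠ ρ (⊤ : Submodule 𝔽 E)) :
    IsMuIndep μ ρ V := by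
  suffices h : ∀ d : ℕ, ∀ J : Submodule 𝔽 E, J ≤ V → finrank 𝔽 J = d →
      (finrank 𝔽 J : ℚ) / μ ≤ ρ J by
    intro J hJ; exact h (finrank 𝔽 J) J hJ rfl
  intro d
  induction d using Nat.strong_induction_on with
  | _ d ih =>
  intro J hJV hd
  rw [hd]
  by_contra hcon
  push_neg at hcon
  rw [lt_div_iff₀ hμ, mul_comm] at hcon
  -- d ≥ 1 since ρ J ≥ 0
  obtain ⟨nJ, hnJ⟩ := hden J
  have hJ0 : (0:ℚ) ≤ μ * ρ J := mul_nonneg hμ.le (hR1 J).1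
  have hd1 : 1 ≤ d := by
    by_contra h
    interval_cases d
    simp at hcon
    exact absurd hcon (not_lt.mpr hJ0)
  -- hyperplane J' of J with ρ J' = ρ J
  obtain ⟨J', hJ'le, hJ'rank⟩ := exists_hyperplane J (n := d - 1) (by omega)
  obtain ⟨nJ', hnJ'⟩ := hden J'
  have hmono : μ * ρ J' ≤ μ * ρ J := by
    have := hR2 J' J hJ'le
    nlinarith
  have hind : ((d - 1 : ℕ) : ℚ) ≤ μ * ρ J' := by
    have := ih (d-1) (by omega) J' (hJ'le.trans hJV) hJ'rank
    rw [hJ'rank, div_le_iff₀ hμ, mul_comm] at this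
    exact this
  have hdd : ((d - 1 : ℕ) : ℚ) = (d : ℚ) - 1 := by
    push_cast [Nat.cast_sub hd1]; ring
  have hρeq : ρ J' = ρ J := by
    have h1 : (nJ : ℚ) < d := by rw [← hnJ]; exact hcon
    have h2 : (nJ : ℚ) ≤ (d:ℚ) - 1 := by
      have : nJ < d := by exact_mod_cast h1
      have : nJ ≤ d - 1 := by omega
      rw [← hdd]; exact_mod_cast this
    have h3 : μ * ρ J' = μ * ρ J := le_antisymm hmono (by
      rw [hnJ]; linarith [hind, hdd ▸ h2])
    have := mul_left_cancel₀ (ne_of_gt hμ) h3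
    exact this
  -- complement C of J inside V
  obtain ⟨Cv, hCv⟩ := Submodule.exists_isCompl (Submodule.comap V.subtype J)
  set C : Submodule 𝔽 E := Cv.map V.subtype with hC
  have hCle : C ≤ V := Submodule.map_subtype_le _ _
  have hmapJ : (Submodule.comap V.subtype J).map V.subtype = J := by
    rw [Submodule.map_comap_subtype]
    exact inf_eq_right.mpr hJV
  have hJC : J ⊔ C = V := by
    rw [← hmapJ, hC, ← Submodule.map_sup, hCv.sup_eq_top,
      Submodule.map_top, Submodule.range_subtype]
  -- dimensions
  have hdimC : finrank 𝔽 J + finrank 𝔽 C = finrank 𝔽 V := by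
    have := Submodule.finrank_sup_add_finrank_inf_eq (Submodule.comap V.subtype J) Cv
    rw [hCv.sup_eq_top, hCv.inf_eq_bot] at this
    simp only [finrank_top, finrank_bot, add_zero] at this
    have h1 : finrank 𝔽 C = finrank 𝔽 Cv := Submodule.finrank_map_subtype_eq V Cv
    have h2 : finrank 𝔽 (Submodule.comap V.subtype J) = finrank 𝔽 J := by
      conv_rhs => rw [← hmapJ]
      exact (Submodule.finrank_map_subtype_eq V _).symm
    omega
  set W : Submodule 𝔽 E := J' ⊔ C with hW
  have hWle : W ≤ V := sup_le (hJ'le.trans hJV) hCle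
  have hWJ : W ⊔ J = V := by
    rw [hW, sup_comm J' C, sup_assoc, sup_comm J' J, ← sup_assoc,
      sup_comm C J, hJC]
    exact sup_eq_left.mpr ((hJ'le.trans hJV))
  have hWlt : W < V := by
    refine lt_of_le_of_ne hWle ?_
    intro h
    have h1 : finrank 𝔽 W ≤ finrank 𝔽 J' + finrank 𝔽 C := by
      have := Submodule.finrank_sup_add_finrank_inf_eq J' C
      rw [← hW] at this
      omega
    have : finrank 𝔽 W = finrank 𝔽 V := by rw [h]
    omega
  -- submodularity
  have hsub := hR3 W J
  rw [hWJ] at hsub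
  have hWJinf : ρ J' ≤ ρ (W ⊓ J) :=
    hR2 _ _ (le_inf (le_sup_left.trans_eq hW.symm) hJ'le)
  have hρW : ρ (⊤ : Submodule 𝔽 E) ≤ ρ W := by
    rw [← hspan]; linarith [hρeq ▸ hWJinf]
  have hWtop : ρ W = ρ (⊤ : Submodule 𝔽 E) :=
    le_antisymm (hR2 W ⊤ le_top) hρW
  exact hminimal W hWlt hWtop
end

section
/- Let (E, ρ) be a q-matroid with a non-degenerate symmetric bilinear form, and let ρ*(V) = dim V + ρ(V^⊥) − ρ(E) be the dual rank function. If B is a basis of (E, ρ) (a maximal subspace with ρ(B) = dim B), then B^⊥ is a basis of (E, ρ*). -/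
open Module

theorem qmatroid_basis_dual
    {𝔽 E : Type*} [Field 𝔽] [Fintype 𝔽] [AddCommGroup E] [Module 𝔽 E]
    [FiniteDimensional 𝔽 E] (ρ : Submodule 𝔽 E → ℕ)
    (hR1 : ∀ V : Submodule 𝔽 E, ρ V ≤ finrank 𝔽 V)
    (hR2 : ∀ V W : Submodule 𝔽 E, V ≤ W → ρ V ≤ ρ W)
    (hR3 : ∀ V W : Submodule 𝔽 E, ρ (V ⊔ W) + ρ (V ⊓ W) ≤ ρ V + ρ W)
    (B : LinearMap.BilinForm 𝔽 E) (hsymm : B.IsSymm) (hnd : B.Nondegenerate)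
    (ρs : Submodule 𝔽 E → ℚ)
    (hρs : ∀ V : Submodule 𝔽 E,
      ρs V = (finrank 𝔽 V : ℚ) + (ρ (B.orthogonal V) : ℚ) - (ρ (⊤ : Submodule 𝔽 E) : ℚ))
    (Bs : Submodule 𝔽 E)
    (hBs : ρ Bs = finrank 𝔽 Bs ∧
      ∀ W : Submodule 𝔽 E, Bs ≤ W → ρ W = finrank 𝔽 W → W = Bs) :
    ρs (B.orthogonal Bs) = (finrank 𝔽 (B.orthogonal Bs) : ℚ) ∧
    ∀ W : Submodule 𝔽 E, B.orthogonal Bs ≤ W →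
      ρs W = (finrank 𝔽 W : ℚ) → W = B.orthogonal Bs := by
  obtain ⟨hrank, hmax⟩ := hBs
  have hrefl : B.IsRefl := hsymm.isRefl
  have horth : ∀ V : Submodule 𝔽 E, B.orthogonal (B.orthogonal V) = V := fun V =>
    LinearMap.BilinForm.orthogonal_orthogonal hnd hrefl V
  have hspan1 : ∀ x : E, finrank 𝔽 (Submodule.span 𝔽 ({x} : Set E)) ≤ 1 := by
    intro x
    rcases eq_or_ne x 0 with h | h
    · rw [h, Submodule.span_zero_singleton, finrank_bot]
      omega
    · rw [finrank_span_singleton h]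
  -- Step a: adding any single line does not change the rank of Bs
  have step1 : ∀ x : E, ρ (Bs ⊔ Submodule.span 𝔽 {x}) = ρ Bs := by
    intro x
    have hle : Bs ≤ Bs ⊔ Submodule.span 𝔽 {x} := le_sup_left
    have hmono := hR2 Bs _ hle
    have hdim : finrank 𝔽 (Bs ⊔ Submodule.span 𝔽 {x} : Submodule 𝔽 E) ≤ finrank 𝔽 Bs + 1 := by
      have h := Submodule.finrank_sup_add_finrank_inf_eq Bs (Submodule.span 𝔽 {x})
      have h2 := hspan1 x
      omega
    rcases eq_or_lt_of_le (hR1 (Bs ⊔ Submodule.span 𝔽 {x})) with heq | hlt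
    · have := hmax _ hle heq
      rw [this]
    · omega
  -- Step b: adding the span of any finite set does not change the rank
  have step2 : ∀ s : Finset E, ρ (Bs ⊔ Submodule.span 𝔽 (s : Set E)) = ρ Bs := by
    intro s
    classical
    induction s using Finset.induction with
    | empty => simp
    | @insert a s ha ih =>
      rw [Finset.coe_insert, Submodule.span_insert, sup_sup_distrib_left]
      have h3 := hR3 (Bs ⊔ Submodule.span 𝔽 {a}) (Bs ⊔ Submodule.span 𝔽 (s : Set E))
      have h4 := hR2 Bs ((Bs ⊔ Submodule.span 𝔽 {a}) ⊓ (Bs ⊔ Submodule.span 𝔽 (s : Set E)))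
        (le_inf le_sup_left le_sup_left)
      have h5 := hR2 Bs ((Bs ⊔ Submodule.span 𝔽 {a}) ⊔ (Bs ⊔ Submodule.span 𝔽 (s : Set E)))
        (le_trans le_sup_left le_sup_left)
      rw [ih, step1 a] at h3
      omega
  -- Conclude ρ ⊤ = ρ Bs
  have htop : ρ (⊤ : Submodule 𝔽 E) = ρ Bs := by
    obtain ⟨s, hs⟩ := Module.finite_def.mp (inferInstance : Module.Finite 𝔽 E)
    have := step2 s
    rw [hs, sup_top_eq] at this
    exact this
  constructor
  · rw [hρs, horth, hrank, htop, hrank]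
    ring
  · intro W hW hρsW
    rw [hρs] at hρsW
    have hnat : ρ (B.orthogonal W) = ρ (⊤ : Submodule 𝔽 E) := by
      have : (ρ (B.orthogonal W) : ℚ) = (ρ (⊤ : Submodule 𝔽 E) : ℚ) := by linarith
      exact_mod_cast this
    have hWB : B.orthogonal W ≤ Bs := by
      have := LinearMap.BilinForm.orthogonal_le (B := B) hW
      rwa [horth] at this
    have hfr : finrank 𝔽 (B.orthogonal W) = finrank 𝔽 Bs := by
      have h1 : finrank 𝔽 (B.orthogonal W) ≤ finrank 𝔽 Bs := Submodule.finrank_mono hWB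
      have h2 := hR1 (B.orthogonal W)
      omega
    have hWBs : B.orthogonal W = Bs := Submodule.eq_of_le_of_finrank_eq hWB hfr
    calc W = B.orthogonal (B.orthogonal W) := (horth W).symm
    _ = B.orthogonal Bs := by rw [hWBs]
end

section
/- Let E be a finite-dimensional F_q-vector space, ℐ a collection of subspaces of E satisfying: (I1) the zero subspace is in ℐ; (I2) ℐ is closed under taking subspaces; (I3) if I, J ∈ ℐ and dim I < dim J then there exists x ∈ J \ I with I ⊕ ⟨x⟩ ∈ ℐ; (I4) for subspaces V, W and maximal-dimensional members I of ℐ contained in V and J of ℐ contained in W, there is a maximal-dimensional member of ℐ contained in V + W that lies in I + J. Let ρ̃: ℐ → ℚ and μ ∈ ℚ_{>0} with μρ̃(I) ∈ ℤ for all I ∈ ℐ, satisfying: (R1') 0 ≤ dim(I)/μ ≤ ρ̃(I) ≤ dim I; (R2') I ≤ J implies ρ̃(I) ≤ ρ̃(J) for I, J ∈ ℐ; (R3') max{ρ̃(K) : K ∈ ℐ, K ≤ I+J} + ρ̃(I∩J) ≤ ρ̃(I) + ρ̃(J) for all I, J ∈ ℐ; (R4') any two maximal-dimensional members of ℐ contained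 in the same subspace V have equal ρ̃-value. Define ρ(V) = max{ρ̃(I) : I ∈ ℐ, I ≤ V}. Then (E, ρ) is a q-polymatroid with denominator μ and every member of ℐ is μ-independent in (E, ρ). -/
open Module

/-- `I` is a maximal-dimensional member of `ℐ` contained in `V`. -/
def IsMaxIn {𝔽 E : Type*} [Field 𝔽] [AddCommGroup E] [Module 𝔽 E]
    (ℐ : Set (Submodule 𝔽 E)) (V I : Submodule 𝔽 E) : Prop :=
  I ∈ ℐ ∧ I ≤ V ∧ ∀ J ∈ ℐ, J ≤ V → finrank 𝔽 J ≤ finrank 𝔽 I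

lemma exists_isMaxIn {𝔽 E : Type*} [Field 𝔽] [AddCommGroup E] [Module 𝔽 E]
    [FiniteDimensional 𝔽 E] (ℐ : Set (Submodule 𝔽 E))
    (hI1 : (⊥ : Submodule 𝔽 E) ∈ ℐ) (V : Submodule 𝔽 E) :
    ∃ I, IsMaxIn ℐ V I := by
  set T : Set ℕ := {n | ∃ I ∈ ℐ, I ≤ V ∧ finrank 𝔽 I = n} with hT
  have hne : T.Nonempty := ⟨finrank 𝔽 (⊥ : Submodule 𝔽 E), ⊥, hI1, bot_le, rfl⟩
  have hbdd : BddAbove T := by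
    refine ⟨finrank 𝔽 E, ?_⟩
    rintro n ⟨I, _, _, rfl⟩
    exact I.finrank_le
  obtain ⟨I, hIm, hIV, hIr⟩ := Nat.sSup_mem hne hbdd
  exact ⟨I, hIm, hIV, fun J hJ hJV => hIr ▸ le_csSup hbdd ⟨J, hJ, hJV, rfl⟩⟩

lemma extend_to_max {𝔽 E : Type*} [Field 𝔽] [AddCommGroup E] [Module 𝔽 E]
    [FiniteDimensional 𝔽 E] (ℐ : Set (Submodule 𝔽 E))
    (hI1 : (⊥ : Submodule 𝔽 E) ∈ ℐ)
    (hI3 : ∀ I ∈ ℐ, ∀ J ∈ ℐ, finrank 𝔽 I < finrank 𝔽 J →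
      ∃ x ∈ J, x ∉ I ∧ I ⊔ Submodule.span 𝔽 {x} ∈ ℐ)
    (V I : Submodule 𝔽 E) (hI : I ∈ ℐ) (hIV : I ≤ V) :
    ∃ M, IsMaxIn ℐ V M ∧ I ≤ M := by
  obtain ⟨M₀, hM₀⟩ := exists_isMaxIn ℐ hI1 V
  suffices h : ∀ n (I : Submodule 𝔽 E), I ∈ ℐ → I ≤ V →
      finrank 𝔽 M₀ ≤ finrank 𝔽 I + n → ∃ M, IsMaxIn ℐ V M ∧ I ≤ M from
    h (finrank 𝔽 M₀) I hI hIV (Nat.le_add_left _ _)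
  intro n
  induction n with
  | zero =>
    intro I hI hIV hle
    exact ⟨I, ⟨hI, hIV, fun J hJ hJV => (hM₀.2.2 J hJ hJV).trans (by omega)⟩, le_rfl⟩
  | succ n ih =>
    intro I hI hIV hle
    by_cases hcase : finrank 𝔽 I < finrank 𝔽 M₀
    · obtain ⟨x, hxM, hxI, hspan⟩ := hI3 I hI M₀ hM₀.1 hcase
      have hlt : I < I ⊔ Submodule.span 𝔽 {x} := by
        refine lt_of_le_of_ne le_sup_left (fun h => hxI ?_)
        rw [h]
        exact Submodule.mem_sup_right (Submodule.mem_span_singleton_self x)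
      have hle' : I ⊔ Submodule.span 𝔽 {x} ≤ V :=
        sup_le hIV (Submodule.span_le.mpr (Set.singleton_subset_iff.mpr (hM₀.2.1 hxM)))
      have hfr : finrank 𝔽 I < finrank 𝔽 ↥(I ⊔ Submodule.span 𝔽 {x}) :=
        Submodule.finrank_lt_finrank_of_lt hlt
      obtain ⟨M, hM, hIM⟩ := ih _ hspan hle' (by omega)
      exact ⟨M, hM, le_sup_left.trans hIM⟩
    · exact ⟨I, ⟨hI, hIV, fun J hJ hJV => (hM₀.2.2 J hJ hJV).trans (by omega)⟩, le_rfl⟩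

theorem qpm_cryptomorphism_from_indep
    {𝔽 E : Type*} [Field 𝔽] [Fintype 𝔽] [AddCommGroup E] [Module 𝔽 E]
    [FiniteDimensional 𝔽 E]
    (ℐ : Set (Submodule 𝔽 E))
    (hI1 : (⊥ : Submodule 𝔽 E) ∈ ℐ)
    (hI2 : ∀ I ∈ ℐ, ∀ J ≤ I, J ∈ ℐ)
    (hI3 : ∀ I ∈ ℐ, ∀ J ∈ ℐ, finrank 𝔽 I < finrank 𝔽 J →
      ∃ x ∈ J, x ∉ I ∧ I ⊔ Submodule.span 𝔽 {x} ∈ ℐ)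
    (hI4 : ∀ V W I J : Submodule 𝔽 E, IsMaxIn ℐ V I → IsMaxIn ℐ W J →
      ∃ K : Submodule 𝔽 E, IsMaxIn ℐ (V ⊔ W) K ∧ K ≤ I ⊔ J)
    (ρt : Submodule 𝔽 E → ℚ) (μ : ℚ) (hμ : 0 < μ)
    (hint : ∀ I ∈ ℐ, ∃ n : ℤ, μ * ρt I = n)
    (hR1' : ∀ I ∈ ℐ, 0 ≤ (finrank 𝔽 I : ℚ) / μ ∧
      (finrank 𝔽 I : ℚ) / μ ≤ ρt I ∧ ρt I ≤ (finrank 𝔽 I : ℚ))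
    (hR2' : ∀ I ∈ ℐ, ∀ J ∈ ℐ, I ≤ J → ρt I ≤ ρt J)
    (hR3' : ∀ I ∈ ℐ, ∀ J ∈ ℐ, ∀ K ∈ ℐ, K ≤ I ⊔ J →
      ρt K + ρt (I ⊓ J) ≤ ρt I + ρt J)
    (hR4' : ∀ V I J : Submodule 𝔽 E, IsMaxIn ℐ V I → IsMaxIn ℐ V J → ρt I = ρt J)
    (ρ : Submodule 𝔽 E → ℚ)
    (hρ : ∀ V : Submodule 𝔽 E,
      IsGreatest {x : ℚ | ∃ I ∈ ℐ, I ≤ V ∧ x = ρt I} (ρ V)) :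
    (∀ V : Submodule 𝔽 E, 0 ≤ ρ V ∧ ρ V ≤ (finrank 𝔽 V : ℚ)) ∧
    (∀ V W : Submodule 𝔽 E, V ≤ W → ρ V ≤ ρ W) ∧
    (∀ V W : Submodule 𝔽 E, ρ (V ⊔ W) + ρ (V ⊓ W) ≤ ρ V + ρ W) ∧
    (∀ V : Submodule 𝔽 E, ∃ n : ℕ, μ * ρ V = n) ∧
    (∀ I ∈ ℐ, IsMuIndep μ ρ I) := by
  -- ρ V equals ρt of any maximal member
  have hρmax : ∀ V M : Submodule 𝔽 E, IsMaxIn ℐ V M → ρ V = ρt M := by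
    intro V M hM
    have h1 : ρt M ≤ ρ V := (hρ V).2 ⟨M, hM.1, hM.2.1, rfl⟩
    obtain ⟨I, hI, hIV, hval⟩ := (hρ V).1
    obtain ⟨M', hM', hIM'⟩ := extend_to_max ℐ hI1 hI3 V I hI hIV
    have h2 : ρ V ≤ ρt M := by
      rw [hval]
      calc ρt I ≤ ρt M' := hR2' I hI M' hM'.1 hIM'
        _ = ρt M := hR4' V M' M hM' hM
    linarith
  refine ⟨?_, ?_, ?_, ?_, ?_⟩
  · intro V
    obtain ⟨I, hI, hIV, hval⟩ := (hρ V).1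
    obtain ⟨h0, h1, h2⟩ := hR1' I hI
    constructor
    · rw [hval]; linarith
    · rw [hval]
      calc ρt I ≤ (finrank 𝔽 I : ℚ) := h2
        _ ≤ (finrank 𝔽 V : ℚ) := by exact_mod_cast Nat.cast_le.mpr (Submodule.finrank_mono hIV)
  · intro V W hVW
    obtain ⟨I, hI, hIV, hval⟩ := (hρ V).1
    rw [hval]
    exact (hρ W).2 ⟨I, hI, hIV.trans hVW, rfl⟩
  · intro V W
    obtain ⟨I₀, hI₀⟩ := exists_isMaxIn ℐ hI1 (V ⊓ W)
    obtain ⟨I, hI, hI₀I⟩ := extend_to_max ℐ hI1 hI3 V I₀ hI₀.1 (hI₀.2.1.trans inf_le_left)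
    obtain ⟨J, hJ, hI₀J⟩ := extend_to_max ℐ hI1 hI3 W I₀ hI₀.1 (hI₀.2.1.trans inf_le_right)
    obtain ⟨K, hK, hKIJ⟩ := hI4 V W I J hI hJ
    have e1 : ρ (V ⊔ W) = ρt K := hρmax _ _ hK
    have e2 : ρ V = ρt I := hρmax _ _ hI
    have e3 : ρ W = ρt J := hρmax _ _ hJ
    have e4 : ρ (V ⊓ W) = ρt I₀ := hρmax _ _ hI₀
    have hIJmem : I ⊓ J ∈ ℐ := hI2 I hI.1 (I ⊓ J) inf_le_left
    have h5 : ρt I₀ ≤ ρt (I ⊓ J) := hR2' I₀ hI₀.1 _ hIJmem (le_inf hI₀I hI₀J)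
    have h6 : ρt K + ρt (I ⊓ J) ≤ ρt I + ρt J := hR3' I hI.1 J hJ.1 K hK.1 hKIJ
    rw [e1, e2, e3, e4]
    linarith
  · intro V
    obtain ⟨M, hM⟩ := exists_isMaxIn ℐ hI1 V
    obtain ⟨n, hn⟩ := hint M hM.1
    have e : ρ V = ρt M := hρmax _ _ hM
    obtain ⟨h0, h1, _⟩ := hR1' M hM.1
    have hpos : (0 : ℚ) ≤ μ * ρt M := by
      have : (0:ℚ) ≤ ρt M := le_trans h0 h1
      positivity
    have hn0 : (0 : ℤ) ≤ n := by
      have : (0:ℚ) ≤ (n:ℚ) := hn ▸ hpos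
      exact_mod_cast this
    refine ⟨n.toNat, ?_⟩
    rw [e, hn]
    exact_mod_cast (Int.toNat_of_nonneg hn0).symm
  · intro I hI J hJI
    have hJ : J ∈ ℐ := hI2 I hI J hJI
    have h1 : (finrank 𝔽 J : ℚ) / μ ≤ ρt J := (hR1' J hJ).2.1
    have h2 : ρt J ≤ ρ J := (hρ J).2 ⟨J, hJ, le_rfl, rfl⟩
    linarith
end
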